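/- arXiv:1409.2193 — 2 statements merged into one kernel-verified Lean document; each statement's English description precedes it below -/
import Mathlib

section
/- Let I be an interpreted system for agents Ags with extended temporal epistemic logic (ETL) semantics. For every group G ⊆ Ags, every ETL formula φ, every variable x having no free occurrence in φ, every context Γ, and every point (r,m) of I: D_Gφ holds at (r,m) relative to Γ if and only if ∃x( (⋀_{i∈G} i≈x) ∧ D_∅( (⋀_{i∈G} i≈x) → φ) ) holds at (r,m) relative to Γ. -/
namespace Paper

open Classical

/-- An environment for a set of agents. -/
structure Env (Agent State Obs Act PropV : Type) where
  init : Set State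
  acts : Agent → Set Act
  trans : State → (Agent → Act) → State → Prop
  obs : Agent → State → Obs
  val : State → Set PropV
  acts_ne : ∀ i, (acts i).Nonempty
  serial : ∀ s a, (∀ i, a i ∈ acts i) → ∃ t, trans s a t

variable {Agent State Obs Act PropV Var Gl Idx Loc : Type}

/-- A strategy: a choice of a set of actions at each state. -/
abbrev Strategy (State Act : Type) := State → Set Act

def IsStrategy (E : Env Agent State Obs Act PropV) (i : Agent) (α : Strategy State Act) : Prop :=
  ∀ s, (α s).Nonempty ∧ α s ⊆ E.acts i

def UniformStrat (E : Env Agent State Obs Act PropV) (i : Agent) (α : Strategy State Act) : Prop :=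
  ∀ s t, E.obs i s = E.obs i t → α s = α t

def DetStrat (α : Strategy State Act) : Prop := ∀ s, ∃ a, α s = {a}

abbrev JointStrategy (Agent State Act : Type) := Agent → Strategy State Act

def IsJoint (E : Env Agent State Obs Act PropV) (α : JointStrategy Agent State Act) : Prop :=
  ∀ i, IsStrategy E i (α i)

/-- The set of all locally uniform joint strategies. -/
def SigmaUnif (E : Env Agent State Obs Act PropV) : Set (JointStrategy Agent State Act) :=
  {α | ∀ i, IsStrategy E i (α i) ∧ UniformStrat E i (α i)}

/-- The set of all locally uniform deterministic joint strategies. -/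
def SigmaUnifDet (E : Env Agent State Obs Act PropV) : Set (JointStrategy Agent State Act) :=
  {α | ∀ i, IsStrategy E i (α i) ∧ UniformStrat E i (α i) ∧ DetStrat (α i)}

/-- Indices for the components of a global state in strategy space:
the environment `e`, the basic agents, and the strategic agents `σ(i)`. -/
inductive SIdx (Agent : Type) : Type
  | env : SIdx Agent
  | ag : Agent → SIdx Agent
  | str : Agent → SIdx Agent

/-- Global states in strategy space: a state of the environment together with
a joint strategy. -/
abbrev GState (Agent State Act : Type) := State × JointStrategy Agent State Act

/-- An interpreted system: a set of runs, a local-state function giving the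
component of a global state for each index, and a propositional assignment. -/
structure IS (Gl Idx Loc PropV : Type) where
  runs : Set (ℕ → Gl)
  loc : Idx → Gl → Loc
  val : Gl → Set PropV

/-- Equality of the `i`-components of two global states. -/
def IS.sameLoc (M : IS Gl Idx Loc PropV) (i : Idx) (g g' : Gl) : Prop := M.loc i g = M.loc i g'

/-- Syntax of the extended temporal epistemic logic ETL/ESL. -/
inductive ESL (Idx PropV Var : Type) : Type
  | tt : ESL Idx PropV Var
  | atom (p : PropV) : ESL Idx PropV Var
  | neg (φ : ESL Idx PropV Var) : ESL Idx PropV Var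
  | conj (φ ψ : ESL Idx PropV Var) : ESL Idx PropV Var
  | next (φ : ESL Idx PropV Var) : ESL Idx PropV Var
  | until_ (φ ψ : ESL Idx PropV Var) : ESL Idx PropV Var
  | box (φ : ESL Idx PropV Var) : ESL Idx PropV Var
  | all (φ : ESL Idx PropV Var) : ESL Idx PropV Var
  | exv (x : Var) (φ : ESL Idx PropV Var) : ESL Idx PropV Var
  | leq (i : Idx) (x : Var) : ESL Idx PropV Var
  | dk (G : Set Idx) (φ : ESL Idx PropV Var) : ESL Idx PropV Var
  | ck (G : Set Idx) (φ : ESL Idx PropV Var) : ESL Idx PropV Var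

/-- The common-knowledge reachability relation on points: the reflexive-transitive
closure of the union over `i ∈ Grp` of the "same `i`-component" relations. -/
def ckRel (M : IS Gl Idx Loc PropV) (Grp : Set Idx) :
    ((ℕ → Gl) × ℕ) → ((ℕ → Gl) × ℕ) → Prop :=
  Relation.ReflTransGen (fun p q => q.1 ∈ M.runs ∧ ∃ i ∈ Grp, M.sameLoc i (p.1 p.2) (q.1 q.2))

variable [DecidableEq Var]

/-- Satisfaction of an ESL formula at a point `(r,m)` of an interpreted system,
relative to a context `Γ` interpreting variables as global states. -/
def esat (M : IS Gl Idx Loc PropV) : ESL Idx PropV Var → (Var → Gl) → (ℕ → Gl) → ℕ → Prop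
  | .tt, _, _, _ => True
  | .atom p, _, r, m => p ∈ M.val (r m)
  | .neg φ, Γ, r, m => ¬ esat M φ Γ r m
  | .conj φ ψ, Γ, r, m => esat M φ Γ r m ∧ esat M ψ Γ r m
  | .next φ, Γ, r, m => esat M φ Γ r (m+1)
  | .until_ φ ψ, Γ, r, m =>
      ∃ m', m ≤ m' ∧ esat M ψ Γ r m' ∧ ∀ k, m ≤ k → k < m' → esat M φ Γ r k
  | .box φ, Γ, r, m => ∀ m', m ≤ m' → esat M φ Γ r m'
  | .all φ, Γ, r, m => ∀ r' ∈ M.runs, (∀ k, k ≤ m → r' k = r k) → esat M φ Γ r' m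
  | .exv x φ, Γ, r, m => ∃ r' ∈ M.runs, ∃ m' : ℕ, esat M φ (Function.update Γ x (r' m')) r m
  | .leq i x, Γ, r, m => M.sameLoc i (r m) (Γ x)
  | .dk Grp φ, Γ, r, m =>
      ∀ r' ∈ M.runs, ∀ m', (∀ i ∈ Grp, M.sameLoc i (r' m') (r m)) → esat M φ Γ r' m'
  | .ck Grp φ, Γ, r, m =>
      ∀ r' ∈ M.runs, ∀ m', ckRel M Grp (r, m) (r', m') → esat M φ Γ r' m'

namespace ESL
def ff : ESL Idx PropV Var := .neg .tt
def impf (φ ψ : ESL Idx PropV Var) : ESL Idx PropV Var := .neg (.conj φ (.neg ψ))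
def orf (φ ψ : ESL Idx PropV Var) : ESL Idx PropV Var := .neg (.conj (.neg φ) (.neg ψ))
def iffF (φ ψ : ESL Idx PropV Var) : ESL Idx PropV Var := .conj (impf φ ψ) (impf ψ φ)
def EX (φ : ESL Idx PropV Var) : ESL Idx PropV Var := .neg (.all (.neg (.next φ)))
end ESL

def bigConj (l : List (ESL Idx PropV Var)) : ESL Idx PropV Var := l.foldr .conj .tt
def bigDisj (l : List (ESL Idx PropV Var)) : ESL Idx PropV Var := l.foldr ESL.orf ESL.ff

/-- The local-state function of strategy space: the `e` component is the state,
the `i` component is agent `i`'s observation, and the `σ(i)` component is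
agent `i`'s strategy. -/
def sLoc (E : Env Agent State Obs Act PropV) :
    SIdx Agent → GState Agent State Act → State ⊕ Obs ⊕ Strategy State Act
  | .env, g => Sum.inl g.1
  | .ag i, g => Sum.inr (Sum.inl (E.obs i g.1))
  | .str i, g => Sum.inr (Sum.inr (g.2 i))

/-- The runs of the strategy space `I(Env,Σ)`. -/
def IsRun (E : Env Agent State Obs Act PropV) (Sig : Set (JointStrategy Agent State Act))
    (r : ℕ → GState Agent State Act) : Prop :=
  (r 0).1 ∈ E.init ∧ (r 0).2 ∈ Sig ∧
  ∀ m, (r (m+1)).2 = (r m).2 ∧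
    ∃ a, (∀ j, a j ∈ (r m).2 j (r m).1) ∧ E.trans (r m).1 a (r (m+1)).1

/-- The strategy space interpreted system `I(Env,Σ)`. -/
def stratSpace (E : Env Agent State Obs Act PropV) (Sig : Set (JointStrategy Agent State Act)) :
    IS (GState Agent State Act) (SIdx Agent) (State ⊕ Obs ⊕ Strategy State Act) PropV :=
  { runs := {r | IsRun E Sig r}, loc := sLoc E, val := fun g => E.val g.1 }

/-- `Env[S/I]`: the environment with all states initial. -/
def Env.allInit (E : Env Agent State Obs Act PropV) : Env Agent State Obs Act PropV :=
  { E with init := Set.univ }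

end Paper
namespace Paper

variable {Idx PropV Var : Type}

/-- The free variables of an ETL formula. -/
def freeVars : ESL Idx PropV Var → Set Var
  | .tt => ∅
  | .atom _ => ∅
  | .neg φ => freeVars φ
  | .conj φ ψ => freeVars φ ∪ freeVars ψ
  | .next φ => freeVars φ
  | .until_ φ ψ => freeVars φ ∪ freeVars ψ
  | .box φ => freeVars φ
  | .all φ => freeVars φ
  | .exv x φ => freeVars φ \ {x}
  | .leq _ x => {x}
  | .dk _ φ => freeVars φ
  | .ck _ φ => freeVars φ

/-- `⋀_{i ∈ G} i≈x`. -/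
noncomputable def groupEq [DecidableEq Idx] (G : Finset Idx) (x : Var) : ESL Idx PropV Var :=
  bigConj (G.toList.map fun i => ESL.leq i x)

lemma esat_congr {Gl Loc : Type} [DecidableEq Var] (M : IS Gl Idx Loc PropV)
    (φ : ESL Idx PropV Var) (Γ Γ' : Var → Gl)
    (h : ∀ v ∈ freeVars φ, Γ v = Γ' v) :
    ∀ r m, esat M φ Γ r m ↔ esat M φ Γ' r m := by
  induction φ generalizing Γ Γ' with
  | tt => simp [esat]
  | atom p => simp [esat]
  | neg φ ih => intro r m; simp [esat, ih Γ Γ' h]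
  | conj φ ψ ih₁ ih₂ =>
      intro r m
      simp only [esat]
      rw [ih₁ Γ Γ' (fun v hv => h v (Or.inl hv)),
        ih₂ Γ Γ' (fun v hv => h v (Or.inr hv))]
  | next φ ih => intro r m; simp [esat, ih Γ Γ' h]
  | until_ φ ψ ih₁ ih₂ =>
      intro r m
      simp only [esat]
      constructor <;> rintro ⟨m', h1, h2, h3⟩ <;> refine ⟨m', h1, ?_, ?_⟩
      · exact (ih₂ Γ Γ' (fun v hv => h v (Or.inr hv)) r m').1 h2
      · exact fun k hk hk' => (ih₁ Γ Γ' (fun v hv => h v (Or.inl hv)) r k).1 (h3 k hk hk')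
      · exact (ih₂ Γ Γ' (fun v hv => h v (Or.inr hv)) r m').2 h2
      · exact fun k hk hk' => (ih₁ Γ Γ' (fun v hv => h v (Or.inl hv)) r k).2 (h3 k hk hk')
  | box φ ih =>
      intro r m; simp only [esat]
      exact forall₂_congr fun m' _ => ih Γ Γ' h r m'
  | all φ ih =>
      intro r m; simp only [esat]
      exact forall₃_congr fun r' _ _ => ih Γ Γ' h r' m
  | exv y φ ih =>
      intro r m; simp only [esat]
      refine exists_congr fun r' => and_congr_right fun _ => exists_congr fun m' => ?_
      apply ih
      intro v hv
      by_cases hvy : v = y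
      · subst hvy; simp [Function.update]
      · simp only [Function.update, dif_neg hvy]
        exact h v ⟨hv, hvy⟩
  | leq i y =>
      intro r m
      simp [esat, h y (by simp [freeVars])]
  | dk Grp φ ih =>
      intro r m; simp only [esat]
      exact forall₃_congr fun r' _ m' =>
        imp_congr Iff.rfl (ih Γ Γ' h r' m')
  | ck Grp φ ih =>
      intro r m; simp only [esat]
      exact forall₃_congr fun r' _ m' =>
        imp_congr Iff.rfl (ih Γ Γ' h r' m')

lemma esat_bigConj {Gl Loc : Type} [DecidableEq Var] (M : IS Gl Idx Loc PropV)
    (l : List (ESL Idx PropV Var)) (Γ : Var → Gl) (r : ℕ → Gl) (m : ℕ) :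
    esat M (bigConj l) Γ r m ↔ ∀ ψ ∈ l, esat M ψ Γ r m := by
  induction l with
  | nil => simp [bigConj, esat]
  | cons a l ih =>
      simp only [bigConj, List.foldr, esat, List.mem_cons] at *
      rw [ih]
      constructor
      · rintro ⟨h1, h2⟩ ψ (rfl | h) <;> [exact h1; exact h2 ψ h]
      · intro h; exact ⟨h a (Or.inl rfl), fun ψ hψ => h ψ (Or.inr hψ)⟩

lemma esat_groupEq {Gl Loc : Type} [DecidableEq Idx] [DecidableEq Var]
    (M : IS Gl Idx Loc PropV) (G : Finset Idx) (x : Var) (Γ : Var → Gl)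
    (r : ℕ → Gl) (m : ℕ) :
    esat M (groupEq G x) Γ r m ↔ ∀ i ∈ G, M.sameLoc i (r m) (Γ x) := by
  simp only [groupEq, esat_bigConj, List.mem_map]
  constructor
  · intro h i hi
    exact h _ ⟨i, Finset.mem_toList.2 hi, rfl⟩
  · rintro h ψ ⟨i, hi, rfl⟩
    exact h i (Finset.mem_toList.1 hi)

lemma esat_impf {Gl Loc : Type} [DecidableEq Var] (M : IS Gl Idx Loc PropV)
    (φ ψ : ESL Idx PropV Var) (Γ : Var → Gl) (r : ℕ → Gl) (m : ℕ) :
    esat M (ESL.impf φ ψ) Γ r m ↔ (esat M φ Γ r m → esat M ψ Γ r m) := by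
  simp only [ESL.impf, esat]; tauto

/-- in any interpreted system, the distributed knowledge
operator `D_G` is expressible from the universal operator `D_∅` via the
constructs `∃x` and `i≈x`:
`D_Gφ ≡ ∃x( G≈x ∧ D_∅( G≈x → φ) )`, for a variable `x` not free in `φ`. -/
theorem dk_eq_exv_universal
    {Agent Gl Loc : Type} [DecidableEq Agent] [DecidableEq Var]
    (M : IS Gl Agent Loc PropV) (G : Finset Agent)
    (φ : ESL Agent PropV Var) (x : Var) (hx : x ∉ freeVars φ)
    (Γ : Var → Gl) (r : ℕ → Gl) (hr : r ∈ M.runs) (m : ℕ) :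
    esat M (.dk (↑G) φ) Γ r m ↔
      esat M (.exv x (.conj (groupEq G x)
        (.dk (∅ : Set Agent) (ESL.impf (groupEq G x) φ)))) Γ r m := by
  constructor
  · intro hD
    refine ⟨r, hr, m, ?_⟩
    set Γ' := Function.update Γ x (r m)
    have hΓx : Γ' x = r m := by simp [Γ']
    simp only [esat]
    constructor
    · rw [esat_groupEq, hΓx]
      intro i _; rfl
    · intro r' hr' m' _
      rintro ⟨hg, hnφ⟩
      apply hnφ
      rw [esat_groupEq, hΓx] at hg
      have hφ : esat M φ Γ r' m' := hD r' hr' m' (fun i hi => hg i hi)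
      exact (esat_congr M φ Γ Γ' (fun v hv => by
        have : v ≠ x := fun h => hx (h ▸ hv)
        simp [Γ', Function.update, this]) r' m').1 hφ
  · rintro ⟨r0, hr0, m0, hsat⟩
    set Γ' := Function.update Γ x (r0 m0) with hΓ'
    have hΓx : Γ' x = r0 m0 := by simp [Γ']
    simp only [esat] at hsat
    obtain ⟨hgrp, hdk⟩ := hsat
    rw [esat_groupEq, hΓx] at hgrp
    intro r' hr' m' hloc
    have hthis := hdk r' hr' m' (by simp)
    have hφ : esat M φ Γ' r' m' := by
      by_contra hn
      refine hthis ⟨?_, hn⟩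
      rw [esat_groupEq, hΓx]
      intro i hi
      exact (hloc i hi).trans (hgrp i hi)
    exact (esat_congr M φ Γ Γ' (fun v hv => by
      have : v ≠ x := fun h => hx (h ▸ hv)
      simp [Γ', Function.update, this]) r' m').2 hφ

end Paper
end

section
/- Let ESL⁻ be the fragment of ESL in which temporal operators occur only in the forms AXφ, ¬A¬Xφ, A(φUψ), and ¬A¬(φUψ). For every environment Env for agents Ags, every set Σ of joint strategies, every ESL⁻ formula φ, every context Γ, and all points (r,n) and (r',n') of the strategy space I(Env,Σ): if r(n) = r'(n') (the two points have the same global state), then φ holds at (r,n) relative to Γ if and only if φ holds at (r',n') relative to Γ. -/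
namespace Paper

variable {Idx PropV Var : Type}

/-- The fragment ESL⁻ of ESL: temporal operators occur only in the forms
`AXφ`, `¬A¬Xφ`, `A(φUψ)` and `¬A¬(φUψ)`. -/
inductive ESLminus : ESL Idx PropV Var → Prop
  | tt : ESLminus .tt
  | atom (p : PropV) : ESLminus (.atom p)
  | neg {φ} : ESLminus φ → ESLminus (.neg φ)
  | conj {φ ψ} : ESLminus φ → ESLminus ψ → ESLminus (.conj φ ψ)
  | exv (x : Var) {φ} : ESLminus φ → ESLminus (.exv x φ)
  | leq (i : Idx) (x : Var) : ESLminus (.leq i x)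
  | dk (G : Set Idx) {φ} : ESLminus φ → ESLminus (.dk G φ)
  | ck (G : Set Idx) {φ} : ESLminus φ → ESLminus (.ck G φ)
  | ax {φ} : ESLminus φ → ESLminus (.all (.next φ))
  | ex {φ} : ESLminus φ → ESLminus (.neg (.all (.neg (.next φ))))
  | au {φ ψ} : ESLminus φ → ESLminus ψ → ESLminus (.all (.until_ φ ψ))
  | eu {φ ψ} : ESLminus φ → ESLminus ψ → ESLminus (.neg (.all (.neg (.until_ φ ψ))))

/-- Splice two runs together: follow `r` up to time `n`, then follow `r''`
shifted so that time `n` corresponds to time `n'`. -/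
def splice {α : Type*} (r : ℕ → α) (n : ℕ) (r'' : ℕ → α) (n' : ℕ) : ℕ → α :=
  fun k => if k ≤ n then r k else r'' (n' + (k - n))

lemma splice_le {α : Type*} {r : ℕ → α} {n : ℕ} {r'' : ℕ → α} {n' k : ℕ} (hk : k ≤ n) :
    splice r n r'' n' k = r k := by simp [splice, hk]

lemma splice_add {α : Type*} {r : ℕ → α} {n : ℕ} {r'' : ℕ → α} {n' : ℕ}
    (h : r n = r'' n') (j : ℕ) : splice r n r'' n' (n + j) = r'' (n' + j) := by
  cases j with
  | zero => simpa [splice] using h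
  | succ j =>
    simp only [splice, if_neg (by omega : ¬ n + (j + 1) ≤ n)]
    congr 1
    omega

lemma isRun_splice {Agent State Obs Act PropV : Type}
    {E : Env Agent State Obs Act PropV} {Sig : Set (JointStrategy Agent State Act)}
    {r r'' : ℕ → GState Agent State Act} {n n' : ℕ}
    (hr : IsRun E Sig r) (hr'' : IsRun E Sig r'') (h : r n = r'' n') :
    IsRun E Sig (splice r n r'' n') := by
  refine ⟨?_, ?_, ?_⟩
  · rw [splice_le (Nat.zero_le n)]; exact hr.1
  · rw [splice_le (Nat.zero_le n)]; exact hr.2.1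
  · intro m
    rcases le_or_gt n m with hm | hm
    · obtain ⟨j, rfl⟩ := Nat.exists_eq_add_of_le hm
      rw [show n + j + 1 = n + (j + 1) from rfl, splice_add h, splice_add h,
        show n' + (j + 1) = n' + j + 1 from rfl]
      exact hr''.2.2 (n' + j)
    · rw [splice_le (by omega : m + 1 ≤ n), splice_le (by omega : m ≤ n)]
      exact hr.2.2 m

/-- Key lemma: one direction of state-dependence, proved by induction on the
fragment predicate. -/
theorem eslminus_key
    {Agent State Obs Act : Type} [DecidableEq Var]
    (E : Env Agent State Obs Act PropV)
    (Sig : Set (JointStrategy Agent State Act))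
    {φ : ESL (SIdx Agent) PropV Var} (hφ : ESLminus φ) :
    ∀ (Γ : Var → GState Agent State Act) (r r' : ℕ → GState Agent State Act),
      IsRun E Sig r → IsRun E Sig r' → ∀ n n' : ℕ, r n = r' n' →
      esat (stratSpace E Sig) φ Γ r n → esat (stratSpace E Sig) φ Γ r' n' := by
  induction hφ with
  | tt => intros; trivial
  | atom p =>
    intro Γ r r' hr hr' n n' h H
    simpa [esat, stratSpace, ← h] using H
  | neg hψ ih =>
    intro Γ r r' hr hr' n n' h H
    simp only [esat] at H ⊢
    exact fun K => H (ih Γ r' r hr' hr n' n h.symm K)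
  | conj hψ hχ ih₁ ih₂ =>
    intro Γ r r' hr hr' n n' h H
    exact ⟨ih₁ Γ r r' hr hr' n n' h H.1, ih₂ Γ r r' hr hr' n n' h H.2⟩
  | exv x hψ ih =>
    intro Γ r r' hr hr' n n' h H
    obtain ⟨r₂, hr₂, m', H⟩ := H
    exact ⟨r₂, hr₂, m', ih _ r r' hr hr' n n' h H⟩
  | leq i x =>
    intro Γ r r' hr hr' n n' h H
    simpa [esat, ← h] using H
  | dk G hψ ih =>
    intro Γ r r' hr hr' n n' h H
    intro r₂ hr₂ m' hloc
    exact H r₂ hr₂ m' (by rw [h]; exact hloc)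
  | ck G hψ ih =>
    intro Γ r r' hr hr' n n' h H
    intro r₂ hr₂ m' hrel
    rcases Relation.ReflTransGen.cases_head hrel with heq | ⟨p, hstep, hrest⟩
    · cases heq
      exact ih Γ r r' hr hr' n n' h (H r hr n Relation.ReflTransGen.refl)
    · refine H r₂ hr₂ m' (Relation.ReflTransGen.head ?_ hrest)
      obtain ⟨hp1, i, hi, hloc⟩ := hstep
      exact ⟨hp1, i, hi, by simpa [h] using hloc⟩
  | ax hψ ih =>
    intro Γ r r' hr hr' n n' h H
    intro r₂ hr₂ hagree
    have h2 : r n = r₂ n' := h.trans (hagree n' le_rfl).symm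
    have hs : IsRun E Sig (splice r n r₂ n') := isRun_splice hr hr₂ h2
    have Hs := H (splice r n r₂ n') hs (fun k hk => splice_le hk)
    have he : splice r n r₂ n' (n + 1) = r₂ (n' + 1) := splice_add h2 1
    exact ih Γ _ r₂ hs hr₂ (n + 1) (n' + 1) he Hs
  | ex hψ ih =>
    intro Γ r r' hr hr' n n' h H
    simp only [esat] at H ⊢
    intro K
    apply H
    intro r₂ hr₂ hagree Hφ
    have h2' : r' n' = r₂ n := by rw [← h]; exact (hagree n le_rfl).symm
    have hs : IsRun E Sig (splice r' n' r₂ n) := isRun_splice hr' hr₂ h2'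
    have he : splice r' n' r₂ n (n' + 1) = r₂ (n + 1) := splice_add h2' 1
    exact K (splice r' n' r₂ n) hs (fun k hk => splice_le hk)
      (ih Γ r₂ _ hr₂ hs (n + 1) (n' + 1) he.symm Hφ)
  | au hψ hχ ih₁ ih₂ =>
    intro Γ r r' hr hr' n n' h H
    intro r₂ hr₂ hagree
    have h2 : r n = r₂ n' := h.trans (hagree n' le_rfl).symm
    have hs : IsRun E Sig (splice r n r₂ n') := isRun_splice hr hr₂ h2
    obtain ⟨m', hm', Hψ, Hφ⟩ := H (splice r n r₂ n') hs (fun k hk => splice_le hk)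
    refine ⟨n' + (m' - n), by omega, ?_, ?_⟩
    · have he : splice r n r₂ n' (n + (m' - n)) = r₂ (n' + (m' - n)) := splice_add h2 _
      rw [show n + (m' - n) = m' by omega] at he
      exact ih₂ Γ _ r₂ hs hr₂ m' (n' + (m' - n)) he (Hψ)
    · intro k hk1 hk2
      have he : splice r n r₂ n' (n + (k - n')) = r₂ (n' + (k - n')) := splice_add h2 _
      rw [show n' + (k - n') = k by omega] at he
      exact ih₁ Γ _ r₂ hs hr₂ (n + (k - n')) k he (Hφ _ (by omega) (by omega))
  | eu hψ hχ ih₁ ih₂ =>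
    intro Γ r r' hr hr' n n' h H
    simp only [esat] at H ⊢
    intro K
    apply H
    intro r₂ hr₂ hagree HU
    have h2' : r' n' = r₂ n := by rw [← h]; exact (hagree n le_rfl).symm
    have hs : IsRun E Sig (splice r' n' r₂ n) := isRun_splice hr' hr₂ h2'
    refine K (splice r' n' r₂ n) hs (fun k hk => splice_le hk) ?_
    obtain ⟨m', hm', Hψ, Hφ⟩ := HU
    refine ⟨n' + (m' - n), by omega, ?_, ?_⟩
    · have he : splice r' n' r₂ n (n' + (m' - n)) = r₂ (n + (m' - n)) := splice_add h2' _
      rw [show n + (m' - n) = m' by omega] at he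
      exact ih₂ Γ r₂ _ hr₂ hs m' (n' + (m' - n)) he.symm Hψ
    · intro k hk1 hk2
      have he : splice r' n' r₂ n (k) = r₂ (n + (k - n')) := by
        have := splice_add h2' (k - n')
        rwa [show n' + (k - n') = k by omega] at this
      exact ih₁ Γ r₂ _ hr₂ hs (n + (k - n')) k he.symm (Hφ _ (by omega) (by omega))

/-- satisfaction of an ESL⁻ formula at a point of strategy space
depends only on the global state at that point. -/
theorem eslminus_state_dependent
    {Agent State Obs Act : Type} [DecidableEq Var]
    (E : Env Agent State Obs Act PropV)
    (Sig : Set (JointStrategy Agent State Act))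
    (φ : ESL (SIdx Agent) PropV Var) (hφ : ESLminus φ)
    (Γ : Var → GState Agent State Act)
    (r r' : ℕ → GState Agent State Act)
    (hr : r ∈ (stratSpace E Sig).runs) (hr' : r' ∈ (stratSpace E Sig).runs)
    (n n' : ℕ) (h : r n = r' n') :
    esat (stratSpace E Sig) φ Γ r n ↔ esat (stratSpace E Sig) φ Γ r' n' :=
  ⟨eslminus_key E Sig hφ Γ r r' hr hr' n n' h,
   eslminus_key E Sig hφ Γ r' r hr' hr n' n h.symm⟩

end Paper
end
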